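/- For the normalized sinc filter κ(t) = sinc(π f_s t) (with κ(0)=1), for every τ ∈ [0, (N-1)/f_s], the sum ∑_{n=0}^{N-1} κ(n/f_s - τ) is strictly positive. -/

import Mathlib

/-!
Put `x = f_s τ ∈ [0, N - 1]`, so the sum is `∑_{n<N} sinc (π (n - x))`. If `x` is an integer, all
terms but one vanish and the sum is `1`. Otherwise `sin (π (n - x)) = (-1)ⁿ⁺¹ sin (π x)`, and with
`x = m + y`, `0 < y < 1`, the sum is `sin (π y) / π` times `∑ (-1)^(m+n) / (x - n)`. Splitting the
latter at `n = m` gives two alternating sums of strictly decreasing positive terms,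
`∑_{k ≤ m} (-1)^k / (y + k)` and `∑_k (-1)^k / (1 - y + k)`, and both are positive.
-/

/-- Normalized sinc: sinc(x) = sin(x)/x for x ≠ 0 and sinc(0) = 1. -/
noncomputable def sinc (x : ℝ) : ℝ := if x = 0 then 1 else Real.sin x / x

open Finset
open Real hiding sinc

theorem alternating_sum_range_mem_Ioc {R : Type*} [Ring R] [PartialOrder R]
    [IsOrderedRing R] {b : ℕ → R} (hb : StrictAnti b) {n : ℕ} (hn : 0 < b n) :
    ∑ k ∈ range (n + 1), (-1) ^ k * b k ∈ Set.Ioc 0 (b 0) := by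
  induction n generalizing b with
  | zero => simpa using hn
  | succ n ih =>
    have htail := ih (b := fun k ↦ b (k + 1)) (fun i j hij ↦ hb (Nat.succ_lt_succ hij)) hn
    have hsplit : ∑ k ∈ range (n + 1 + 1), (-1) ^ k * b k
        = b 0 - ∑ k ∈ range (n + 1), (-1) ^ k * b (k + 1) := by
      simp only [sum_range_succ' _ (n + 1), pow_succ, pow_zero, one_mul, neg_mul,
        mul_neg, mul_one, sum_neg_distrib]
      abel
    rw [hsplit]
    constructor
    · exact sub_pos.mpr (htail.2.trans_lt (hb Nat.zero_lt_one))
    · exact sub_le_self _ htail.1.le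

theorem alternating_sum_inv_add_pos {c : ℝ} (hc : 0 < c) (n : ℕ) :
    0 < ∑ k ∈ range (n + 1), (-1) ^ k * (c + k)⁻¹ :=
  (alternating_sum_range_mem_Ioc (fun i j hij ↦ inv_strictAnti₀ (by positivity)
    (by simpa using hij)) (by positivity)).1

theorem sinc_eq_real_sinc : sinc = Real.sinc := rfl

theorem sinc_pi_mul_nat_sub_nat (n m : ℕ) : sinc (π * (n - m)) = if n = m then 1 else 0 := by
  split_ifs with h
  · simp [h, sinc_eq_real_sinc]
  · have hnm : (n : ℤ) - m ≠ 0 := sub_ne_zero.mpr (by exact_mod_cast h)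
    have harg : π * (n - m) = (((n : ℤ) - m : ℤ) : ℝ) * π := by push_cast; ring
    rw [harg, sinc_eq_real_sinc,
      Real.sinc_of_ne_zero (mul_ne_zero (by exact_mod_cast hnm) pi_ne_zero), sin_int_mul_pi,
      zero_div]

theorem sinc_pi_mul_nat_sub {n : ℕ} {x : ℝ} (hx : (n : ℝ) ≠ x) :
    sinc (π * (n - x)) = sin (π * x) / π * ((-1) ^ n * (x - n)⁻¹) := by
  have hnx : (n : ℝ) - x ≠ 0 := sub_ne_zero.mpr hx
  rw [sinc_eq_real_sinc, Real.sinc_of_ne_zero (mul_ne_zero pi_ne_zero hnx),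
    show π * (n - x) = n * π - π * x by ring, sin_nat_mul_pi_sub]
  field_simp
  ring

theorem sum_sinc_pi_mul_sub_nat (N m : ℕ) (hm : m < N) :
    ∑ n ∈ range N, sinc (π * (n - m)) = 1 := by
  simp [sinc_pi_mul_nat_sub_nat, hm]

theorem alternating_sum_inv_sub_pos (m j : ℕ) {y : ℝ} (hy0 : 0 < y) (hy1 : y < 1) :
    0 < ∑ n ∈ range (m + 1 + (j + 1)), (-1) ^ (m + n) * (m + y - n)⁻¹ := by
  rw [sum_range_add]
  apply add_pos
  · rw [← sum_range_reflect]
    refine (alternating_sum_inv_add_pos hy0 m).trans_eq (sum_congr rfl fun k hk ↦ ?_)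
    have hkm : k ≤ m := Nat.lt_succ_iff.mp (mem_range.mp hk)
    rw [show m + 1 - 1 - k = m - k by omega, show m + (m - k) = k + 2 * (m - k) by omega,
      pow_add, pow_mul, neg_one_sq, one_pow, mul_one, Nat.cast_sub hkm]
    ring_nf
  · have hz : 0 < 1 - y := sub_pos.mpr hy1
    refine (alternating_sum_inv_add_pos hz j).trans_eq (sum_congr rfl fun k _ ↦ ?_)
    rw [show m + (m + 1 + k) = k + 1 + 2 * m by omega, pow_add, pow_mul, neg_one_sq, one_pow,
      mul_one, pow_succ]
    push_cast
    rw [show (m : ℝ) + y - (m + 1 + k) = -(1 - y + k) by ring, inv_neg]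
    ring

theorem sum_sinc_pi_mul_sub_add_pos (m j : ℕ) {y : ℝ} (hy0 : 0 < y) (hy1 : y < 1) :
    0 < ∑ n ∈ range (m + 1 + (j + 1)), sinc (π * (n - (m + y))) := by
  have hne : ∀ n : ℕ, (n : ℝ) ≠ m + y := by
    intro n hn
    have hmn : m < n := by exact_mod_cast (show (m : ℝ) < n by linarith)
    have hnm : n < m + 1 := by exact_mod_cast (show (n : ℝ) < m + 1 by linarith)
    omega
  have hsin : sin (π * (m + y)) = (-1) ^ m * sin (π * y) := by
    rw [show π * (m + y) = π * y + m * π by ring, sin_add_nat_mul_pi]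
  simp only [sinc_pi_mul_nat_sub (hne _), hsin, ← mul_sum]
  have hfac : 0 < sin (π * y) / π :=
    div_pos (sin_pos_of_pos_of_lt_pi (by positivity) (by nlinarith [pi_pos])) pi_pos
  refine (mul_pos hfac (alternating_sum_inv_sub_pos m j hy0 hy1)).trans_eq ?_
  rw [mul_sum, mul_sum]
  refine sum_congr rfl fun n _ ↦ ?_
  ring

theorem sum_sinc_pi_mul_sub_pos (N : ℕ) {x : ℝ} (hx0 : 0 ≤ x) (hxN : x ≤ N - 1) :
    0 < ∑ n ∈ range N, sinc (π * (n - x)) := by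
  set m := ⌊x⌋₊
  have hmx : (m : ℝ) ≤ x := Nat.floor_le hx0
  have hxm : x < m + 1 := Nat.lt_floor_add_one x
  rcases hmx.eq_or_lt with hxint | hmx
  · have hmN : m < N := by exact_mod_cast (show (m : ℝ) < N by linarith)
    rw [← hxint, sum_sinc_pi_mul_sub_nat N m hmN]
    exact one_pos
  · have hmN : m + 1 < N := by exact_mod_cast (show (m : ℝ) + 1 < N by linarith)
    obtain ⟨j, rfl⟩ : ∃ j, N = m + 1 + (j + 1) := ⟨N - m - 2, by omega⟩
    simpa using sum_sinc_pi_mul_sub_add_pos m j (sub_pos.mpr hmx) (by linarith)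

theorem stmt2_general (fs : ℝ) (hfs : 0 < fs) (N : ℕ) (τ : ℝ)
    (hτ0 : 0 ≤ τ) (hτ1 : τ ≤ ((N : ℝ) - 1) / fs) :
    0 < ∑ n ∈ Finset.range N, sinc (Real.pi * fs * ((n : ℝ) / fs - τ)) := by
  have harg : ∀ n : ℕ, π * fs * ((n : ℝ) / fs - τ) = π * (n - fs * τ) := by
    intro n
    field_simp
  simp only [harg]
  exact sum_sinc_pi_mul_sub_pos N (by positivity) (by rwa [le_div_iff₀ hfs, mul_comm] at hτ1)

/-- For the sinc filter κ(t) = sinc(π f_s t), for every τ ∈ [0, (N−1)/f_s],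
the sum ∑_{n=0}^{N-1} κ(n/f_s − τ) is strictly positive. -/
theorem stmt2 (fs : ℝ) (hfs : 0 < fs) (N : ℕ) (hN : 1 ≤ N) (τ : ℝ)
    (hτ0 : 0 ≤ τ) (hτ1 : τ ≤ ((N : ℝ) - 1) / fs) :
    0 < ∑ n ∈ Finset.range N, sinc (Real.pi * fs * ((n : ℝ) / fs - τ)) :=
  stmt2_general fs hfs N τ hτ0 hτ1
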